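/- Let C = F_1 + … + F_k be a pseudo-simple minimal low degree unmixed ΣΠΣΠ(k) circuit of size s (s ≥ 2) over a sufficiently large (e.g. infinite) field F that computes the identically zero polynomial, and let 2 ≤ t ≤ k−1. Then the pseudo greatest common divisor G := gcd(F_1,…,F_t)_pseudo satisfies ‖G‖ ≤ s^(5(k−t+1)²). -/

import Mathlib

open MvPolynomial Finset

attribute [local instance 10] Classical.propDecidable

/-- Embed a univariate polynomial as a multivariate polynomial in the variable `x j`. -/
noncomputable def toMv {F : Type*} [CommSemiring F] {n : ℕ} (j : Fin n) (f : Polynomial F) :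
    MvPolynomial (Fin n) F :=
  Polynomial.aeval (X j) f

/-- The sparsity `‖P‖`: the number of monomials of `P` with nonzero coefficient. -/
def sparsity {F : Type*} [CommSemiring F] {n : ℕ} (P : MvPolynomial (Fin n) F) : ℕ :=
  P.support.card

/-- `‖P‖_A`: the number of distinct exponent vectors of monomials of `P` after setting
the exponents of the variables indexed by `A` to zero. -/
noncomputable def sparsityOn {F : Type*} [CommSemiring F] {n : ℕ} (A : Finset (Fin n))
    (P : MvPolynomial (Fin n) F) : ℕ :=
  (P.support.image fun m => Finsupp.filter (fun j => j ∉ A) m).card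

/-- Substitute `c` for the variable `x i`. -/
noncomputable def substAt {F : Type*} [CommSemiring F] {n : ℕ} (i : Fin n) (c : F)
    (P : MvPolynomial (Fin n) F) : MvPolynomial (Fin n) F :=
  aeval (fun j : Fin n => if j = i then MvPolynomial.C c else X j) P

/-- Substitute `a j` for `x j` for all `j < t` (for `t = 0` this is `P` itself). -/
noncomputable def substPrefix {F : Type*} [CommSemiring F] {n : ℕ} (t : ℕ) (a : Fin n → F)
    (P : MvPolynomial (Fin n) F) : MvPolynomial (Fin n) F :=
  aeval (fun j : Fin n => if (j : ℕ) < t then MvPolynomial.C (a j) else X j) P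

/-- The operator `D_{x i = c}(P, Q) = P·(Q|_{x i = c}) − (P|_{x i = c})·Q`. -/
noncomputable def Dop {F : Type*} [CommRing F] {n : ℕ} (i : Fin n) (c : F)
    (P Q : MvPolynomial (Fin n) F) : MvPolynomial (Fin n) F :=
  P * substAt i c Q - substAt i c P * Q

/-- `f` (a univariate polynomial, placed in the variable `x i`) is an indecomposable factor
of `Q`: `Q = f(x i) · H` with `H` not depending on `x i`. -/
def IsIndecompFactor {F : Type*} [CommSemiring F] {n : ℕ} (i : Fin n) (f : Polynomial F)
    (Q : MvPolynomial (Fin n) F) : Prop :=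
  ∃ H : MvPolynomial (Fin n) F, Q = toMv i f * H ∧ i ∉ H.vars

/-- The set `S 1 ∩ ⋯ ∩ S k` where `S i = {g i 1 (x 1), …, g i n (x n)}`. -/
noncomputable def commonFactors {F : Type*} [CommSemiring F] {n k : ℕ}
    (g : Fin k → Fin n → Polynomial F) : Finset (MvPolynomial (Fin n) F) :=
  (Finset.univ.image fun x : Fin k × Fin n => toMv x.2 (g x.1 x.2)).filter
    fun p => ∀ i : Fin k, ∃ j : Fin n, toMv j (g i j) = p

/-- The pseudo greatest common divisor: the product of the polynomials in `S 1 ∩ ⋯ ∩ S k`. -/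
noncomputable def pseudoGcd {F : Type*} [CommSemiring F] {n k : ℕ}
    (g : Fin k → Fin n → Polynomial F) : MvPolynomial (Fin n) F :=
  ∏ p ∈ commonFactors g, p

set_option maxHeartbeats 1000000
set_option linter.unusedSectionVars false
section helpers
variable {F : Type*} [CommSemiring F] {n : ℕ}

lemma toMv_one (j : Fin n) : toMv (F := F) j 1 = 1 := by simp [toMv]

lemma toMv_injective (j : Fin n) : Function.Injective (toMv (F := F) j) := by
  intro f f' h
  have := congrArg (MvPolynomial.aeval (fun l : Fin n => if l = j then (Polynomial.X : Polynomial F) else 0)) h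
  simpa [toMv, ← Polynomial.aeval_algHom_apply] using this

lemma toMv_ne_zero {j : Fin n} {f : Polynomial F} (hf : f ≠ 0) : toMv j f ≠ 0 := by
  intro h; exact hf (toMv_injective j (by simpa [toMv] using h))

lemma vars_toMv [Nontrivial F] (j : Fin n) (f : Polynomial F) : (toMv j f).vars ⊆ {j} := by
  rw [toMv, Polynomial.aeval_def, Polynomial.eval₂_eq_sum, Polynomial.sum_def]
  refine (vars_sum_subset _ _).trans ?_
  intro l hl
  simp only [Finset.mem_biUnion] at hl
  obtain ⟨e, -, hl⟩ := hl
  have h1 : ((algebraMap F (MvPolynomial (Fin n) F)) (f.coeff e) * X j ^ e).vars ⊆ ({j} : Finset (Fin n)) := by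
    refine (vars_mul _ _).trans ?_
    simp only [Finset.union_subset_iff]
    constructor
    · rw [show (algebraMap F (MvPolynomial (Fin n) F)) (f.coeff e) = MvPolynomial.C (f.coeff e) from rfl]
      simp [vars_C]
    · exact (vars_pow _ _).trans (by rw [vars_X])
  exact h1 hl

lemma substAt_toMv (i : Fin n) (c : F) (j : Fin n) (f : Polynomial F) :
    substAt i c (toMv j f) = if j = i then MvPolynomial.C (f.eval c) else toMv j f := by
  rw [substAt, toMv, ← Polynomial.aeval_algHom_apply]
  by_cases h : j = i
  · subst h
    simp only [aeval_X, eq_self_iff_true, if_true]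
    rw [show (MvPolynomial.C (R := F) (σ := Fin n) c) = algebraMap F (MvPolynomial (Fin n) F) c from rfl,
      Polynomial.aeval_algebraMap_apply_eq_algebraMap_eval]
    rfl
  · simp [aeval_X, h, toMv]

lemma substAt_self {i : Fin n} {c : F} {P : MvPolynomial (Fin n) F} (h : i ∉ P.vars) :
    substAt i c P = P := by
  conv_lhs => rw [as_sum P]
  rw [substAt, map_sum]
  conv_rhs => rw [as_sum P]
  refine Finset.sum_congr rfl fun m hm => ?_
  rw [aeval_monomial, monomial_eq]
  congr 1
  rw [Finsupp.prod, Finsupp.prod]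
  refine Finset.prod_congr rfl fun l hl => ?_
  have : l ≠ i := by rintro rfl; exact h ((mem_vars l).2 ⟨m, hm, hl⟩)
  simp [this]

end helpers
section helpers2
variable {F : Type*} [Field F] {n : ℕ}

lemma sparsity_toMv_le (j : Fin n) (f : Polynomial F) :
    ((toMv j f).support).card ≤ f.support.card := by
  rw [toMv, Polynomial.aeval_def, Polynomial.eval₂_eq_sum, Polynomial.sum_def]
  refine (Finset.card_le_card (support_sum)).trans ?_
  refine (Finset.card_biUnion_le).trans ?_
  refine Finset.sum_le_card_nsmul _ _ 1 (fun e he => ?_) |>.trans (by simp)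
  have : (algebraMap F (MvPolynomial (Fin n) F)) (f.coeff e) * X j ^ e
      = MvPolynomial.monomial (Finsupp.single j e) (f.coeff e) := by
    rw [show (algebraMap F (MvPolynomial (Fin n) F)) (f.coeff e) = MvPolynomial.C (f.coeff e) from rfl]
    rw [C_mul_X_pow_eq_monomial]
  rw [this]
  exact (Finset.card_le_card support_monomial_subset).trans (by simp)

lemma sparsity_mul_le (P Q : MvPolynomial (Fin n) F) :
    ((P * Q).support).card ≤ P.support.card * Q.support.card := by
  classical
  exact (Finset.card_le_card (support_mul P Q)).trans Finset.card_add_le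

lemma sparsity_prod_le {ι : Type*} (s : Finset ι) (f : ι → MvPolynomial (Fin n) F) :
    ((∏ p ∈ s, f p).support).card ≤ ∏ p ∈ s, (f p).support.card := by
  classical
  induction s using Finset.induction_on with
  | empty =>
      rw [Finset.prod_empty, Finset.prod_empty, show (1 : MvPolynomial (Fin n) F) = MvPolynomial.monomial 0 1 by simp]
      rw [MvPolynomial.support_monomial]
      simp
  | insert a s' h ih =>
      rw [Finset.prod_insert h, Finset.prod_insert h]
      exact (sparsity_mul_le _ _).trans (Nat.mul_le_mul_left _ ih)

lemma exists_eval_ne [Infinite F] {w : Polynomial F} (hw : w ≠ 0) :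
    ∃ b : F, w.eval b ≠ 0 := by
  obtain ⟨b, hb⟩ := Infinite.exists_notMem_finset (w.roots.toFinset)
  exact ⟨b, fun h0 => hb (by rw [Multiset.mem_toFinset, Polynomial.mem_roots hw]; exact h0)⟩

/-- two-point functional separating two distinct monic polynomials -/
lemma exists_two_point [Infinite F] {u w : Polynomial F} (huw : u ≠ w)
    (hu : u.Monic) (hw : w.Monic) :
    ∃ b b' θ : F, w.eval b - θ * w.eval b' = 0 ∧ u.eval b - θ * u.eval b' ≠ 0 := by
  obtain ⟨b', hb'⟩ := exists_eval_ne hw.ne_zero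
  set p : Polynomial F := Polynomial.C (w.eval b') * u - Polynomial.C (u.eval b') * w with hp
  have hpne : p ≠ 0 := by
    intro h0
    rw [hp, sub_eq_zero] at h0
    have hl : w.eval b' = u.eval b' := by
      have h2 := congrArg Polynomial.leadingCoeff h0
      rwa [Polynomial.leadingCoeff_mul, Polynomial.leadingCoeff_mul, Polynomial.leadingCoeff_C,
        Polynomial.leadingCoeff_C, hu.leadingCoeff, hw.leadingCoeff, mul_one, mul_one] at h2
    rw [← hl] at h0
    exact huw (mul_left_cancel₀ (by simpa using hb') h0)
  obtain ⟨b, hb⟩ := exists_eval_ne hpne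
  refine ⟨b, b', w.eval b / w.eval b', by field_simp; ring, fun hcon => ?_⟩
  apply hb
  have hu2 : u.eval b = w.eval b / w.eval b' * u.eval b' := by
    exact sub_eq_zero.mp hcon
  rw [hp]
  simp only [Polynomial.eval_sub, Polynomial.eval_mul, Polynomial.eval_C]
  rw [hu2]
  field_simp
  ring

end helpers2
section core
variable {F : Type*} [Field F] [Infinite F] {n : ℕ}

lemma substAt_add (i : Fin n) (c : F) (P Q : MvPolynomial (Fin n) F) :
    substAt i c (P + Q) = substAt i c P + substAt i c Q := by simp [substAt]
lemma substAt_mul (i : Fin n) (c : F) (P Q : MvPolynomial (Fin n) F) :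
    substAt i c (P * Q) = substAt i c P * substAt i c Q := by simp [substAt]
lemma substAt_C (i : Fin n) (c : F) (a : F) :
    substAt i c (MvPolynomial.C a) = MvPolynomial.C a := by simp [substAt]
lemma substAt_zero (i : Fin n) (c : F) : substAt i c 0 = 0 := by simp [substAt]
lemma substAt_sum {ι : Type*} (i : Fin n) (c : F) (s : Finset ι) (f : ι → MvPolynomial (Fin n) F) :
    substAt i c (∑ x ∈ s, f x) = ∑ x ∈ s, substAt i c (f x) := by simp [substAt]
lemma substAt_prod {ι : Type*} (i : Fin n) (c : F) (s : Finset ι) (f : ι → MvPolynomial (Fin n) F) :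
    substAt i c (∏ x ∈ s, f x) = ∏ x ∈ s, substAt i c (f x) := by simp [substAt]

lemma vars_prod_toMv {E : Finset (Fin n)} {w : Fin n → Polynomial F} :
    (∏ j ∈ E, toMv j (w j)).vars ⊆ E := by
  refine (vars_prod _).trans ?_
  intro l hl
  simp only [Finset.mem_biUnion] at hl
  obtain ⟨j, hj, hl⟩ := hl
  have := vars_toMv j (w j) hl
  simp only [Finset.mem_singleton] at this
  exact this ▸ hj

/-- The core combinatorial lemma: in a minimal zero circuit consisting of a gate
`G·Q` (with `G` a product of monic univariates over modes `D`, `Q` not using modes `D`)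
plus `|I|` product gates, the number of modes in `D` at which some product gate
disagrees with `G` is less than `|I|`. -/
theorem core_lemma {ι : Type*} [DecidableEq ι] :
    ∀ (N : ℕ) (I : Finset ι), I.card ≤ N →
    ∀ (D : Finset (Fin n)) (u : Fin n → Polynomial F) (δ : ι → F)
      (v : ι → Fin n → Polynomial F) (Q : MvPolynomial (Fin n) F),
    (∀ j ∈ D, (u j).Monic) →
    (∀ i ∈ I, ∀ j, (v i j).Monic) →
    Q ≠ 0 →
    (∀ j ∈ D, j ∉ Q.vars) →
    ((∏ j ∈ D, toMv j (u j)) * Q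
        + ∑ i ∈ I, MvPolynomial.C (δ i) * ∏ j, toMv j (v i j) = 0) →
    (∀ B ⊆ I, B.Nonempty → ∑ i ∈ B, MvPolynomial.C (δ i) * ∏ j, toMv j (v i j) ≠ 0) →
    (∀ B ⊆ I, B ≠ I →
      (∏ j ∈ D, toMv j (u j)) * Q
        + ∑ i ∈ B, MvPolynomial.C (δ i) * ∏ j, toMv j (v i j) ≠ 0) →
    (D.filter fun j => ∃ i ∈ I, v i j ≠ u j).card + 1 ≤ I.card := by
  intro N
  induction N with
  | zero =>
    intro I hI D u δ v Q hu hv hQ hQv hId hM1 hM2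
    exfalso
    have hIe : I = ∅ := Finset.card_eq_zero.mp (Nat.le_zero.mp hI)
    rw [hIe, Finset.sum_empty, add_zero] at hId
    exact mul_ne_zero (Finset.prod_ne_zero_iff.2
      fun j hj => toMv_ne_zero (hu j hj).ne_zero) hQ hId
  | succ N IH =>
    intro I hI D u δ v Q hu hv hQ hQv hId hM1 hM2
    have hGQ : (∏ j ∈ D, toMv j (u j)) * Q ≠ 0 :=
      mul_ne_zero (Finset.prod_ne_zero_iff.2
        fun j hj => toMv_ne_zero (hu j hj).ne_zero) hQ
    have hIne : I.Nonempty := by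
      rw [Finset.nonempty_iff_ne_empty]
      intro hIe
      rw [hIe, Finset.sum_empty, add_zero] at hId
      exact hGQ hId
    by_cases hT : (D.filter fun j => ∃ i ∈ I, v i j ≠ u j).Nonempty
    · obtain ⟨jh, hjh⟩ := hT
      rw [Finset.mem_filter] at hjh
      obtain ⟨hjD, is, hisI, hvis⟩ := hjh
      -- two-point functional killing the class of `v is jh` at mode `jh`
      obtain ⟨b, b', θ, hkill, hkeep⟩ :=
        exists_two_point (u := u jh) (w := v is jh) (Ne.symm hvis) (hu jh hjD) (hv is hisI jh)
      set φf : Polynomial F → F := fun f => f.eval b - θ * f.eval b' with hφf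
      -- computations
      have hG : ∀ c : F, substAt jh c ((∏ j ∈ D, toMv j (u j)) * Q)
          = MvPolynomial.C ((u jh).eval c) * ((∏ j ∈ D.erase jh, toMv j (u j)) * Q) := by
        intro c
        rw [substAt_mul, substAt_self (hQv jh hjD), substAt_prod,
          ← Finset.mul_prod_erase D _ hjD, substAt_toMv, if_pos rfl]
        rw [Finset.prod_congr rfl (fun j hj => by
          rw [substAt_toMv, if_neg (Finset.mem_erase.mp hj).1])]
        ring
      have hgc : ∀ (c : F) (i : ι), substAt jh c (MvPolynomial.C (δ i) * ∏ j, toMv j (v i j))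
          = MvPolynomial.C (δ i) * (MvPolynomial.C ((v i jh).eval c)
              * ∏ j ∈ Finset.univ.erase jh, toMv j (v i j)) := by
        intro c i
        rw [substAt_mul, substAt_C, substAt_prod,
          ← Finset.mul_prod_erase Finset.univ _ (Finset.mem_univ jh), substAt_toMv, if_pos rfl]
        rw [Finset.prod_congr rfl (fun j hj => by
          rw [substAt_toMv, if_neg (Finset.mem_erase.mp hj).1])]
      have hP' : ∀ i : ι, (∏ j, toMv j (if j = jh then 1 else v i j))
          = ∏ j ∈ Finset.univ.erase jh, toMv j (v i j) := by
        intro i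
        rw [← Finset.mul_prod_erase Finset.univ _ (Finset.mem_univ jh), if_pos rfl, toMv_one,
          one_mul]
        exact Finset.prod_congr rfl (fun j hj => by rw [if_neg (Finset.mem_erase.mp hj).1])
      -- the ψ-transformed identity
      have hb0 : substAt jh b ((∏ j ∈ D, toMv j (u j)) * Q)
          + ∑ i ∈ I, substAt jh b (MvPolynomial.C (δ i) * ∏ j, toMv j (v i j)) = 0 := by
        rw [← substAt_sum, ← substAt_add, hId, substAt_zero]
      have hb'0 : substAt jh b' ((∏ j ∈ D, toMv j (u j)) * Q)
          + ∑ i ∈ I, substAt jh b' (MvPolynomial.C (δ i) * ∏ j, toMv j (v i j)) = 0 := by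
        rw [← substAt_sum, ← substAt_add, hId, substAt_zero]
      have hNewId : (∏ j ∈ D.erase jh, toMv j (u j)) * (MvPolynomial.C (φf (u jh)) * Q)
          + ∑ i ∈ I, MvPolynomial.C (δ i * φf (v i jh))
              * ∏ j, toMv j (if j = jh then 1 else v i j) = 0 := by
        have e1 : ∀ i ∈ I, MvPolynomial.C (δ i * φf (v i jh))
            * ∏ j, toMv j (if j = jh then 1 else v i j)
            = substAt jh b (MvPolynomial.C (δ i) * ∏ j, toMv j (v i j))
              - MvPolynomial.C θ
                * substAt jh b' (MvPolynomial.C (δ i) * ∏ j, toMv j (v i j)) := by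
          intro i _
          rw [hgc, hgc, hP', hφf]
          simp only [map_sub, map_mul]
          ring
        rw [Finset.sum_congr rfl e1, Finset.sum_sub_distrib, ← Finset.mul_sum,
          show (∏ j ∈ D.erase jh, toMv j (u j)) * (MvPolynomial.C (φf (u jh)) * Q)
            = substAt jh b ((∏ j ∈ D, toMv j (u j)) * Q)
              - MvPolynomial.C θ * substAt jh b' ((∏ j ∈ D, toMv j (u j)) * Q) by
          rw [hG, hG, hφf]; simp only [map_sub, map_mul]; ring]
        linear_combination hb0 - (MvPolynomial.C θ : MvPolynomial (Fin n) F) * hb'0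
      -- extract a minimal sub-circuit containing the G-gate
      set W' : MvPolynomial (Fin n) F :=
        (∏ j ∈ D.erase jh, toMv j (u j)) * (MvPolynomial.C (φf (u jh)) * Q) with hW'
      set gate' : ι → MvPolynomial (Fin n) F := fun i =>
        MvPolynomial.C (δ i * φf (v i jh)) * ∏ j, toMv j (if j = jh then 1 else v i j)
        with hgate'
      have hW'ne : W' ≠ 0 := by
        refine mul_ne_zero (Finset.prod_ne_zero_iff.2
          fun j hj => toMv_ne_zero (hu j (Finset.mem_of_mem_erase hj)).ne_zero)
          (mul_ne_zero ?_ hQ)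
        rw [Ne, MvPolynomial.C_eq_zero]
        exact hkeep
      set Pr : Finset ι → Prop := fun B => W' + ∑ i ∈ B, gate' i = 0 with hPr
      set S : Finset (Finset ι) := I.powerset.filter Pr with hS
      have hIS : I ∈ S := by
        rw [hS, Finset.mem_filter, Finset.mem_powerset]
        exact ⟨le_refl I, hNewId⟩
      obtain ⟨B, hBS, hBmin⟩ := Finset.exists_min_image S Finset.card ⟨I, hIS⟩
      rw [hS, Finset.mem_filter, Finset.mem_powerset] at hBS
      obtain ⟨hBI, hBP⟩ := hBS
      have hmem : ∀ B' ⊆ I, Pr B' → B.card ≤ B'.card := fun B' h1 h2 =>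
        hBmin B' (by rw [hS, Finset.mem_filter, Finset.mem_powerset]; exact ⟨h1, h2⟩)
      -- all coefficients on B are nonzero
      have hδ' : ∀ i ∈ B, δ i * φf (v i jh) ≠ 0 := by
        intro i hiB h0
        have hz : gate' i = 0 := by
          have hC : MvPolynomial.C (δ i * φf (v i jh)) = (0 : MvPolynomial (Fin n) F) := by
            rw [h0, map_zero]
          calc gate' i = MvPolynomial.C (δ i * φf (v i jh))
                * ∏ j, toMv j (if j = jh then 1 else v i j) := rfl
            _ = 0 := by rw [hC, zero_mul]
        have hpe : Pr (B.erase i) := by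
          show W' + ∑ x ∈ B.erase i, gate' x = 0
          rw [Finset.sum_erase _ hz]
          exact hBP
        have ha1 := hmem _ ((Finset.erase_subset _ _).trans hBI) hpe
        have ha2 := Finset.card_erase_of_mem hiB
        have ha3 := Finset.card_pos.mpr ⟨i, hiB⟩
        omega
      have hisB : is ∉ B := by
        intro h
        apply hδ' is h
        have : φf (v is jh) = 0 := hkill
        rw [this, mul_zero]
      have hBne : B.Nonempty := by
        rw [Finset.nonempty_iff_ne_empty]
        rintro rfl
        have : W' + ∑ x ∈ (∅ : Finset ι), gate' x = 0 := hBP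
        rw [Finset.sum_empty, add_zero] at this
        exact hW'ne this
      have hBssub : B ⊂ I := ⟨hBI, fun hIB => hisB (hIB hisI)⟩
      have hBcard : B.card ≤ N := by
        have := Finset.card_lt_card hBssub
        omega
      -- IH on the minimal sub-circuit (gates B)
      have c1 : ((D.erase jh).filter fun j => ∃ i ∈ B, (if j = jh then 1 else v i j) ≠ u j).card
          + 1 ≤ B.card := by
        refine IH B hBcard (D.erase jh) u (fun i => δ i * φf (v i jh))
          (fun i j => if j = jh then 1 else v i j) (MvPolynomial.C (φf (u jh)) * Q)
          (fun j hj => hu j (Finset.mem_of_mem_erase hj))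
          (fun i hiB j => by
            show (if j = jh then 1 else v i j).Monic
            by_cases hj : j = jh
            · rw [if_pos hj]; exact Polynomial.monic_one
            · rw [if_neg hj]; exact hv i (hBI hiB) j)
          (mul_ne_zero (by rw [Ne, MvPolynomial.C_eq_zero]; exact hkeep) hQ)
          (fun j hj hjv => ?_) hBP ?_ ?_
        · have hsub2 : (MvPolynomial.C (φf (u jh)) * Q).vars ⊆ Q.vars :=
            (vars_mul _ _).trans (by simp)
          exact hQv j (Finset.mem_of_mem_erase hj) (hsub2 hjv)
        · -- M1 for the derived circuit
          intro B1 hB1B hB1ne h0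
          have h0' : ∑ x ∈ B1, gate' x = 0 := h0
          have hP2 : Pr (B \ B1) := by
            show W' + ∑ x ∈ B \ B1, gate' x = 0
            have hsd := Finset.sum_sdiff (f := gate') hB1B
            rw [h0', add_zero] at hsd
            rw [hsd]
            exact hBP
          have := hmem _ ((Finset.sdiff_subset).trans hBI) hP2
          have h1 := Finset.card_sdiff_of_subset hB1B
          have h2 := Finset.card_pos.mpr hB1ne
          have h3 := Finset.card_le_card hB1B
          omega
        · -- M2 for the derived circuit
          intro B2 hB2B hB2ne h0
          have h0' : Pr B2 := h0
          have hb1 := hmem _ (hB2B.trans hBI) h0'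
          have hb2 := Finset.card_lt_card
            (HasSubset.Subset.ssubset_of_ne hB2B (by exact hB2ne))
          omega
      have c1' : ((D.erase jh).filter fun j => ∃ i ∈ B, v i j ≠ u j).card + 1 ≤ B.card := by
        have hfeq : (D.erase jh).filter (fun j => ∃ i ∈ B, v i j ≠ u j)
            = (D.erase jh).filter (fun j => ∃ i ∈ B, (if j = jh then 1 else v i j) ≠ u j) := by
          apply Finset.filter_congr
          intro j hj
          simp only [if_neg (Finset.mem_erase.mp hj).1]
        rw [hfeq]
        exact c1

      -- the complementary circuit (gates R = I \ B), with the common part of B ∪ {gate0}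
      set R : Finset ι := I \ B with hR
      set DA : Finset (Fin n) := D.filter (fun j => ∀ i ∈ B, v i j = u j) with hDA
      set QA : MvPolynomial (Fin n) F :=
        (∏ j ∈ D \ DA, toMv j (u j)) * Q
          + ∑ i ∈ B, MvPolynomial.C (δ i)
              * ∏ j ∈ Finset.univ.filter (fun j => j ∉ DA), toMv j (v i j) with hQA
      have hDAD : DA ⊆ D := Finset.filter_subset _ _
      have hGA : (∏ j ∈ DA, toMv j (u j)) * QA
          = (∏ j ∈ D, toMv j (u j)) * Q
            + ∑ i ∈ B, MvPolynomial.C (δ i) * ∏ j, toMv j (v i j) := by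
        rw [hQA, mul_add, Finset.mul_sum]
        congr 1
        · rw [← mul_assoc,
            mul_comm (∏ j ∈ DA, toMv j (u j)) (∏ j ∈ D \ DA, toMv j (u j)),
            Finset.prod_sdiff hDAD]
        · refine Finset.sum_congr rfl fun i hiB => ?_
          rw [mul_left_comm]
          congr 1
          have h1 : (∏ j ∈ DA, toMv j (u j)) = ∏ j ∈ DA, toMv j (v i j) := by
            refine Finset.prod_congr rfl fun j hj => ?_
            rw [hDA, Finset.mem_filter] at hj
            rw [hj.2 i hiB]
          rw [h1]
          have h2 : DA = Finset.univ.filter (fun j => j ∈ DA) := by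
            rw [Finset.filter_univ_mem]
          nth_rewrite 1 [h2]
          exact Finset.prod_filter_mul_prod_filter_not Finset.univ (fun j => j ∈ DA)
            (fun j => toMv j (v i j))

      have hBneI : B ≠ I := fun h => hisB (h ▸ hisI)
      have hQAne : QA ≠ 0 := by
        intro h0
        apply hM2 B hBI hBneI
        rw [← hGA, h0, mul_zero]
      have hRcard : R.card ≤ N := by
        have h1 : R.card = I.card - B.card := Finset.card_sdiff_of_subset hBI
        have h2 := Finset.card_pos.mpr hBne
        omega
      have c2 : (DA.filter fun j => ∃ i ∈ R, v i j ≠ u j).card + 1 ≤ R.card := by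
        refine IH R hRcard DA u δ v QA
          (fun j hj => hu j (hDAD hj))
          (fun i hiR j => hv i (Finset.mem_sdiff.mp hiR).1 j)
          hQAne
          (fun j hj hjv => ?_)
          (by
            have hss : ∑ i ∈ R, (MvPolynomial.C (δ i) * ∏ j, toMv j (v i j))
                + ∑ i ∈ B, (MvPolynomial.C (δ i) * ∏ j, toMv j (v i j))
                = ∑ i ∈ I, (MvPolynomial.C (δ i) * ∏ j, toMv j (v i j)) := by
              rw [hR]; exact Finset.sum_sdiff hBI
            linear_combination hGA + hId + hss)
          (fun B1 hB1 hB1ne => hM1 B1 (hB1.trans Finset.sdiff_subset) hB1ne)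
          (fun B2 hB2 hB2ne h0 => ?_)
        · -- vars of QA avoid DA
          rw [hQA] at hjv
          rcases Finset.mem_union.mp (Finset.mem_of_subset (vars_add_subset _ _) hjv)
            with hjv1 | hjv2
          · rcases Finset.mem_union.mp (Finset.mem_of_subset (vars_mul _ _) hjv1)
              with hjv3 | hjv4
            · have : j ∈ D \ DA := Finset.mem_of_subset vars_prod_toMv hjv3
              exact (Finset.mem_sdiff.mp this).2 hj
            · exact hQv j (hDAD hj) hjv4
          · have h5 := Finset.mem_of_subset (vars_sum_subset _ _) hjv2
            rw [Finset.mem_biUnion] at h5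
            obtain ⟨i, hiB, h6⟩ := h5
            rcases Finset.mem_union.mp (Finset.mem_of_subset (vars_mul _ _) h6)
              with h7 | h8
            · rw [vars_C] at h7
              exact absurd h7 (Finset.notMem_empty j)
            · have : j ∈ Finset.univ.filter (fun j => j ∉ DA) :=
                Finset.mem_of_subset vars_prod_toMv h8
              rw [Finset.mem_filter] at this
              exact this.2 hj
        · -- M2 for the complementary circuit
          rw [hGA, add_assoc, ← Finset.sum_union (Finset.disjoint_right.mpr
              (fun a haB2 => (Finset.mem_sdiff.mp (hB2 haB2)).2))] at h0
          refine hM2 (B ∪ B2) (Finset.union_subset hBI (hB2.trans Finset.sdiff_subset)) ?_ h0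
          obtain ⟨i0, hi0R, hi0B2⟩ := Finset.exists_of_ssubset
            ⟨hB2, fun h => hB2ne (subset_antisymm hB2 h)⟩
          intro hBu
          have : i0 ∈ B ∪ B2 := hBu ▸ (Finset.mem_sdiff.mp hi0R).1
          rcases Finset.mem_union.mp this with h | h
          · exact (Finset.mem_sdiff.mp hi0R).2 h
          · exact hi0B2 h
      -- final counting
      have hsub : (D.filter fun j => ∃ i ∈ I, v i j ≠ u j) ⊆
          insert jh (((D.erase jh).filter fun j => ∃ i ∈ B, v i j ≠ u j)
            ∪ (DA.filter fun j => ∃ i ∈ R, v i j ≠ u j)) := by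
        intro j hj
        rw [Finset.mem_filter] at hj
        obtain ⟨hjD', i, hiI, hine⟩ := hj
        rw [Finset.mem_insert]
        by_cases hjjh : j = jh
        · exact Or.inl hjjh
        · right
          rw [Finset.mem_union]
          by_cases hw : ∃ i' ∈ B, v i' j ≠ u j
          · exact Or.inl (by rw [Finset.mem_filter]; exact ⟨Finset.mem_erase.mpr ⟨hjjh, hjD'⟩, hw⟩)
          · push_neg at hw
            refine Or.inr (by
              rw [Finset.mem_filter]
              refine ⟨by rw [hDA, Finset.mem_filter]; exact ⟨hjD', hw⟩, i, ?_, hine⟩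
              rw [hR, Finset.mem_sdiff]
              exact ⟨hiI, fun hiB => hine (hw i hiB)⟩)
      have hc := Finset.card_le_card hsub
      have hc2 := Finset.card_insert_le jh (((D.erase jh).filter fun j => ∃ i ∈ B, v i j ≠ u j)
            ∪ (DA.filter fun j => ∃ i ∈ R, v i j ≠ u j))
      have hc3 := Finset.card_union_le ((D.erase jh).filter fun j => ∃ i ∈ B, v i j ≠ u j)
            (DA.filter fun j => ∃ i ∈ R, v i j ≠ u j)
      have hIcard : B.card + R.card = I.card := by
        rw [hR]
        have h1 := Finset.card_sdiff_of_subset hBI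
        have h2 := Finset.card_le_card hBI
        omega
      omega

    · rw [Finset.not_nonempty_iff_eq_empty] at hT
      rw [hT]
      simpa using Finset.card_pos.mpr hIne

end core


section cross
variable {F : Type*} [Field F] {n : ℕ}

/-- retraction onto the `j`-th variable -/
noncomputable def retr (j : Fin n) : MvPolynomial (Fin n) F →ₐ[F] Polynomial F :=
  MvPolynomial.aeval (fun l : Fin n => if l = j then (Polynomial.X : Polynomial F) else 0)

lemma retr_toMv_self (j : Fin n) (f : Polynomial F) : retr j (toMv j f) = f := by
  rw [toMv, retr, ← Polynomial.aeval_algHom_apply]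
  simp

lemma retr_toMv_other {j j' : Fin n} (h : j' ≠ j) (f : Polynomial F) :
    retr j (toMv j' f) = Polynomial.C (f.coeff 0) := by
  rw [toMv, retr, ← Polynomial.aeval_algHom_apply]
  simp only [aeval_X, if_neg h]
  rw [Polynomial.aeval_def, Polynomial.eval₂_at_zero]
  rfl

lemma monic_const_eq_one {f : Polynomial F} (hm : f.Monic) {c : F} (h : f = Polynomial.C c) :
    f = 1 := by
  have h1 : f.leadingCoeff = 1 := hm
  rw [h] at h1 ⊢
  rw [Polynomial.leadingCoeff_C] at h1
  rw [h1, map_one]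

lemma cross_var_eq_one {j j' : Fin n} (hne : j' ≠ j) {f f' : Polynomial F} (hm : f.Monic)
    (h : toMv j f = toMv j' f') : f = 1 := by
  have h1 : f = Polynomial.C (f'.coeff 0) := by
    rw [← retr_toMv_self j f, h, retr_toMv_other hne]
  exact monic_const_eq_one hm h1

lemma monic_isUnit_toMv {j : Fin n} {f : Polynomial F} (hm : f.Monic)
    (h : IsUnit (toMv j f)) : f = 1 := by
  have h2 : IsUnit (retr j (toMv j f)) := h.map _
  rw [retr_toMv_self] at h2
  exact hm.eq_one_of_isUnit h2

end cross


/-- Claim 3.1.1. Let `C = F 0 + ⋯ + F (k-1)` be a pseudo-simple minimal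
low degree unmixed ΣΠΣΠ(k) circuit of size `s ≥ 2` over an infinite field computing the
zero polynomial, and let `2 ≤ t ≤ k − 1`. Then
`G = gcd(F 1, …, F t)_pseudo` satisfies `‖G‖ ≤ s ^ (5 (k − t + 1)²)`. -/
theorem sparsity_pseudoGcd_le
    {F : Type*} [Field F] [Infinite F] {n k s t : ℕ} (hs : 2 ≤ s)
    (ht : 2 ≤ t) (htk : t ≤ k - 1)
    (β : Fin k → F) (hβ : ∀ i, β i ≠ 0)
    (g : Fin k → Fin n → Polynomial F)
    (hmonic : ∀ i j, (g i j).Monic)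
    (hsize : ∀ i j, (g i j).support.card ≤ s)
    (Fp : Fin k → MvPolynomial (Fin n) F)
    (hFp : ∀ i, Fp i = MvPolynomial.C (β i) * ∏ j : Fin n, toMv j (g i j))
    (hlow : (∑ i, Fp i).totalDegree ≤ n)
    (hmin : ∀ A : Finset (Fin k), A.Nonempty → A ≠ Finset.univ → ∑ i ∈ A, Fp i ≠ 0)
    (hps : pseudoGcd g = 1)
    (hzero : ∑ i, Fp i = 0) :
    sparsity (pseudoGcd fun i : Fin t => g (Fin.castLE (htk.trans (Nat.sub_le k 1)) i))
      ≤ s ^ (5 * (k - t + 1) ^ 2) := by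
  classical
  have hkt : t ≤ k := htk.trans (Nat.sub_le k 1)
  set κ : Fin t → Fin k := Fin.castLE hkt with hκ
  have ht0 : 0 < t := by omega
  have htk' : t < k := by
    rcases Nat.eq_zero_or_pos k with hk0 | hk0
    · omega
    · omega
  set zt : Fin t := ⟨0, ht0⟩ with hzt
  set u : Fin n → Polynomial F := fun j => g (κ zt) j with hu
  set D : Finset (Fin n) :=
    Finset.univ.filter (fun j => (∀ i : Fin t, g (κ i) j = u j) ∧ u j ≠ 1) with hD
  set CF : Finset (MvPolynomial (Fin n) F) :=
    commonFactors (fun i : Fin t => g (κ i)) with hCF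
  -- Structure of the common factors of the first t gates
  have lemA : CF ⊆ insert 1 (D.image fun j => toMv j (u j)) := by
    intro p hp
    rw [hCF, commonFactors, Finset.mem_filter] at hp
    obtain ⟨him, hall⟩ := hp
    rw [Finset.mem_image] at him
    obtain ⟨⟨i0, j0⟩, -, hpd⟩ := him
    by_cases hp1 : p = 1
    · rw [hp1]; exact Finset.mem_insert_self 1 _
    · have hji : ∀ i : Fin t, toMv j0 (g (κ i) j0) = p := by
        intro i
        obtain ⟨j', hj'⟩ := hall i
        by_cases hjj : j' = j0
        · rwa [hjj] at hj'
        · exfalso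
          apply hp1
          rw [← hpd]
          have := cross_var_eq_one hjj (hmonic (κ i0) j0) (by rw [hpd, ← hj'])
          rw [this, toMv_one]
      have hju : ∀ i : Fin t, g (κ i) j0 = u j0 := by
        intro i
        apply toMv_injective j0
        rw [hji i, hu, ← hji zt]
      have hu1 : u j0 ≠ 1 := by
        intro h1
        apply hp1
        rw [← hji zt, hju zt, h1, toMv_one]
      refine Finset.mem_insert_of_mem (Finset.mem_image.mpr ⟨j0, ?_, ?_⟩)
      · rw [hD, Finset.mem_filter]; exact ⟨Finset.mem_univ _, hju, hu1⟩
      · rw [← hji zt, hju zt]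
  -- every common mode has a disagreeing later gate (pseudo-simplicity)
  have lemB : ∀ j ∈ D, ∃ i : Fin k, ¬ (i : ℕ) < t ∧ g i j ≠ u j := by
    intro j hj
    rw [hD, Finset.mem_filter] at hj
    obtain ⟨-, hallj, hne1⟩ := hj
    by_contra hcon
    push_neg at hcon
    have hallk : ∀ i : Fin k, g i j = u j := by
      intro i
      by_cases hi : (i : ℕ) < t
      · have : κ ⟨(i : ℕ), hi⟩ = i := by
          apply Fin.ext; simp [hκ]
        rw [← this]; exact hallj _
      · exact hcon i (Nat.not_lt.mp hi)
    have hmem : toMv j (u j) ∈ commonFactors g := by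
      rw [commonFactors, Finset.mem_filter]
      constructor
      · rw [Finset.mem_image]
        exact ⟨(κ zt, j), Finset.mem_univ _, rfl⟩
      · exact fun i => ⟨j, by rw [hallk i]⟩
    have hun : IsUnit (toMv j (u j)) := by
      apply isUnit_of_dvd_one
      rw [← hps, pseudoGcd]
      exact Finset.dvd_prod_of_mem _ hmem
    exact hne1 (monic_isUnit_toMv (hmonic (κ zt) j) hun)
  -- set up the circuit for the core lemma
  set I : Finset (Fin k) := Finset.univ.filter (fun i : Fin k => ¬ (i : ℕ) < t) with hI
  set P1 : Finset (Fin k) := Finset.univ.filter (fun i : Fin k => (i : ℕ) < t) with hP1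
  have hztP1 : κ zt ∈ P1 := by
    rw [hP1, Finset.mem_filter]
    refine ⟨Finset.mem_univ _, ?_⟩
    simp [hκ, hzt]
    omega
  have htI : (⟨t, htk'⟩ : Fin k) ∈ I := by
    rw [hI, Finset.mem_filter]
    exact ⟨Finset.mem_univ _, by simp⟩
  have hP1I : Disjoint P1 I := by
    rw [hP1, hI]
    rw [Finset.disjoint_filter]
    exact fun x _ h1 h2 => h2 h1
  have hgu : ∀ i : Fin k, (i : ℕ) < t → ∀ j ∈ D, g i j = u j := by
    intro i hi j hj
    rw [hD, Finset.mem_filter] at hj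
    have : κ ⟨(i : ℕ), hi⟩ = i := by apply Fin.ext; simp [hκ]
    rw [← this]
    exact hj.2.1 _
  set Q : MvPolynomial (Fin n) F :=
    ∑ i ∈ P1, MvPolynomial.C (β i) * ∏ j ∈ Finset.univ.filter (fun j => j ∉ D),
      toMv j (g i j) with hQ
  have hW : ∑ i ∈ P1, Fp i = (∏ j ∈ D, toMv j (u j)) * Q := by
    rw [hQ, Finset.mul_sum]
    refine Finset.sum_congr rfl fun i hi => ?_
    rw [hP1, Finset.mem_filter] at hi
    rw [hFp i, mul_left_comm]
    congr 1
    rw [← Finset.prod_filter_mul_prod_filter_not Finset.univ (fun j => j ∈ D)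
      (fun j => toMv j (g i j)), Finset.filter_univ_mem]
    congr 1
    exact Finset.prod_congr rfl fun j hj => by rw [hgu i hi.2 j hj]
  have hWne : ∑ i ∈ P1, Fp i ≠ 0 := by
    apply hmin P1 ⟨κ zt, hztP1⟩
    intro hPu
    have : (⟨t, htk'⟩ : Fin k) ∈ P1 := hPu ▸ Finset.mem_univ _
    rw [hP1, Finset.mem_filter] at this
    exact absurd this.2 (by simp)
  have hQne : Q ≠ 0 := fun h0 => hWne (by rw [hW, h0, mul_zero])
  have hcore : (D.filter fun j => ∃ i ∈ I, g i j ≠ u j).card + 1 ≤ I.card := by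
    refine Eq.trans_le (by congr!) (core_lemma (I.card) I le_rfl D u β g Q
      (fun j _ => hmonic (κ zt) j)
      (fun i _ j => hmonic i j)
      hQne
      (fun j hj hjv => ?_)
      ?_ ?_ ?_)
    · -- vars of Q avoid D
      rw [hQ] at hjv
      have h5 := Finset.mem_of_subset (vars_sum_subset _ _) hjv
      rw [Finset.mem_biUnion] at h5
      obtain ⟨i, hiP, h6⟩ := h5
      rcases Finset.mem_union.mp (Finset.mem_of_subset (vars_mul _ _) h6) with h7 | h8
      · rw [vars_C] at h7
        exact absurd h7 (Finset.notMem_empty j)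
      · have : j ∈ Finset.univ.filter (fun j => j ∉ D) :=
          Finset.mem_of_subset vars_prod_toMv h8
        rw [Finset.mem_filter] at this
        exact this.2 hj
    · -- the identity
      rw [← hW, show ∀ S : Finset (Fin k), (∑ i ∈ S, MvPolynomial.C (β i) * ∏ j, toMv j (g i j))
          = ∑ i ∈ S, Fp i from fun S => Finset.sum_congr rfl fun i _ => (hFp i).symm]
      rw [hP1, hI, Finset.sum_filter_add_sum_filter_not]
      exact hzero
    · -- M1
      intro B hBI hBne
      rw [show (∑ i ∈ B, MvPolynomial.C (β i) * ∏ j, toMv j (g i j)) = ∑ i ∈ B, Fp i from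
        Finset.sum_congr rfl fun i _ => (hFp i).symm]
      apply hmin B hBne
      intro hBu
      have : κ zt ∈ B := hBu ▸ Finset.mem_univ _
      have h2 := hBI this
      rw [hI, Finset.mem_filter] at h2
      apply h2.2
      simp [hκ, hzt]
      omega
    · -- M2
      intro B hBI hBne
      rw [show (∑ i ∈ B, MvPolynomial.C (β i) * ∏ j, toMv j (g i j)) = ∑ i ∈ B, Fp i from
        Finset.sum_congr rfl fun i _ => (hFp i).symm, ← hW,
        ← Finset.sum_union (hP1I.mono_right hBI)]
      obtain ⟨i0, hi0I, hi0B⟩ := Finset.exists_of_ssubset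
        (HasSubset.Subset.ssubset_of_ne hBI hBne)
      apply hmin _ ⟨κ zt, Finset.mem_union_left _ hztP1⟩
      intro hUu
      have : i0 ∈ P1 ∪ B := hUu ▸ Finset.mem_univ _
      rcases Finset.mem_union.mp this with h | h
      · exact Finset.disjoint_left.mp hP1I h hi0I
      · exact hi0B h
  -- D is contained in the disagreement set
  have hDsub : D ⊆ D.filter fun j => ∃ i ∈ I, g i j ≠ u j := by
    intro j hj
    rw [Finset.mem_filter]
    obtain ⟨i, hi1, hi2⟩ := lemB j hj
    exact ⟨hj, i, by rw [hI, Finset.mem_filter]; exact ⟨Finset.mem_univ _, hi1⟩, hi2⟩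
  have hDcard : D.card + 1 ≤ I.card := le_trans (by
    exact Nat.add_le_add_right (Finset.card_le_card hDsub) 1) hcore
  -- bound the size of I
  have hIbound : I.card ≤ k - t := by
    have h1 : P1.card + I.card = k := by
      rw [hP1, hI]
      rw [Finset.card_filter_add_card_filter_not]
      exact Fintype.card_fin k
    have h2 : t ≤ P1.card := by
      have : ∀ x : Fin t, κ x ∈ P1 := by
        intro x
        rw [hP1, Finset.mem_filter]
        exact ⟨Finset.mem_univ _, by simp [hκ]⟩
      have h3 := Finset.card_le_card_of_injOn (s := (Finset.univ : Finset (Fin t)))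
        (t := P1) κ (fun x _ => this x)
        (fun a _ b _ hab => Fin.castLE_injective hkt hab)
      simpa using h3
    omega
  -- sparsity chain
  have hCFcard : CF.card ≤ k - t := by
    have := (Finset.card_le_card lemA).trans ((Finset.card_insert_le _ _).trans
      (Nat.add_le_add_right (Finset.card_image_le) 1))
    omega
  have hsp1 : sparsity (pseudoGcd fun i : Fin t => g (κ i)) ≤ s ^ CF.card := by
    rw [sparsity, pseudoGcd, ← hCF]
    refine le_trans (sparsity_prod_le CF id) ?_
    refine Finset.prod_le_pow_card CF _ s fun p hp => ?_
    have hp2 := hp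
    rw [hCF, commonFactors, Finset.mem_filter, Finset.mem_image] at hp2
    obtain ⟨⟨⟨i0, j0⟩, -, hpd⟩, -⟩ := hp2
    rw [← hpd]
    exact (sparsity_toMv_le _ _).trans (hsize _ _)
  refine le_trans hsp1 (Nat.pow_le_pow_right (by omega) ?_)
  have : k - t ≤ 5 * (k - t + 1) ^ 2 := by nlinarith [Nat.sub_le k t]
  omega
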